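/- arXiv:0811.3109 — 2 statements merged into one kernel-verified Lean document; each statement's English description precedes it below -/
import Mathlib

section
/- Let G be a group, A a G-module, and suppose there exists an element σ in the center of G acting on A as multiplication by -1. Then multiplication by 2 annihilates the first cohomology group H^1(G, A). -/
/-! For commuting `g`, `h` the cocycle identity applied to `g * h = h * g` gives
`(ρ g - 1) (f h) = (ρ h - 1) (f g)`. Taking `h = σ`, which acts as `-1`, this reads
`d⁰(f σ) = -2 f`, so twice every 1-cocycle is a coboundary. -/

open groupCohomology

variable {k G : Type} [CommRing k] [Group G] {A : Rep k G}

theorem cocycles₁_sub_eq_of_commute (f : cocycles₁ A) {g h : G} (hgh : Commute g h) :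
    A.ρ g (f h) - f h = A.ρ h (f g) - f g := by
  have hmul := (mem_cocycles₁_iff f).1 f.2
  have key : A.ρ g (f h) + f g = A.ρ h (f g) + f h := by
    rw [← hmul, ← hmul, hgh.eq]
  rw [sub_eq_sub_iff_add_eq_add, key]

theorem d₀₁_neg_eq_two_nsmul_of_central_neg {σ : G} (hσ : σ ∈ Subgroup.center G)
    (hact : ∀ a : A, A.ρ σ a = -a) (f : cocycles₁ A) :
    d₀₁ A (-f σ) = 2 • ⇑f := by
  funext g
  have hcomm : Commute g σ := Subgroup.mem_center_iff.1 hσ g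
  rw [d₀₁_hom_apply, map_neg, neg_sub_neg, ← neg_sub, cocycles₁_sub_eq_of_commute f hcomm, hact,
    Pi.smul_apply, two_nsmul]
  abel

theorem H1_two_nsmul_eq_zero_of_central_neg {σ : G} (hσ : σ ∈ Subgroup.center G)
    (hact : ∀ a : A, A.ρ σ a = -a) (x : H1 A) :
    2 • x = 0 := by
  induction x using H1_induction_on with
  | h f =>
    rw [← map_nsmul, H1π_eq_zero_iff]
    exact ⟨-f σ, d₀₁_neg_eq_two_nsmul_of_central_neg hσ hact f⟩

/-- **Sah's lemma.** If a `G`-module `A` admits a central element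
`σ` of `G` acting as multiplication by `-1`, then `2` annihilates `H¹(G, A)`. -/
theorem stmt_1 {G : Type} [Group G] (A : Rep ℤ G) (σ : G)
    (hσ : σ ∈ Subgroup.center G) (hact : ∀ a : A, A.ρ σ a = -a) :
    ∀ x : groupCohomology.H1 A, (2 : ℤ) • x = 0 := by
  intro x
  rw [ofNat_zsmul]
  exact H1_two_nsmul_eq_zero_of_central_neg hσ hact x
end

section
/- Let ℓ be a prime, N ≥ 0, and let H ≤ SL₂(ℤ_ℓ) be the subgroup generated by the elementary matrices (1, β; 0, 1) and (1, 0; β, 1) for β ∈ ℓ^N ℤ_ℓ. Then H contains the principal congruence subgroup Γ(ℓ^{2N}) consisting of matrices congruent to the identity modulo ℓ^{2N}. -/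
/-!
Over a commutative ring, an `SL₂` matrix `(a, b; c, d)` whose corner `a` is a unit factors as
`(1, 0; (c - w)/a, 1) (1, v; 0, 1) (1, 0; w, 1) (1, (b - v)/a; 0, 1)` for any factorisation
`a - 1 = v w`. If `t ∣ b`, `t ∣ c` and `t² ∣ a - 1`, taking `v = t` makes all four off-diagonal
entries multiples of `t`. Over a local ring the corner `a` is automatically a unit when `t` is not:
`a ≡ 1 mod t`. When `t` is a unit, a non-unit corner is repaired by first multiplying by
`(1, 1; 0, 1)`, which replaces `a` by the unit `a + c`.
-/

open Matrix
open scoped MatrixGroups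

namespace Matrix.SpecialLinearGroup

variable {R : Type*} [CommRing R]

def upperUnitriangular (β : R) : SL(2, R) :=
  ⟨!![1, β; 0, 1], by simp [det_fin_two_of]⟩

def lowerUnitriangular (β : R) : SL(2, R) :=
  ⟨!![1, 0; β, 1], by simp [det_fin_two_of]⟩

@[simp]
theorem coe_upperUnitriangular (β : R) :
    (upperUnitriangular β : Matrix (Fin 2) (Fin 2) R) = !![1, β; 0, 1] :=
  rfl

@[simp]
theorem coe_lowerUnitriangular (β : R) :
    (lowerUnitriangular β : Matrix (Fin 2) (Fin 2) R) = !![1, 0; β, 1] :=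
  rfl

def elementaryOfLevel (t : R) : Set SL(2, R) :=
  {g | ∃ β : R, t ∣ β ∧
    ((g : Matrix (Fin 2) (Fin 2) R) = !![1, β; 0, 1] ∨ (g : Matrix (Fin 2) (Fin 2) R) = !![1, 0; β, 1])}

variable {t β : R}

theorem upperUnitriangular_mem_closure (h : t ∣ β) :
    upperUnitriangular β ∈ Subgroup.closure (elementaryOfLevel t) :=
  Subgroup.subset_closure ⟨β, h, Or.inl rfl⟩

theorem lowerUnitriangular_mem_closure (h : t ∣ β) :
    lowerUnitriangular β ∈ Subgroup.closure (elementaryOfLevel t) :=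
  Subgroup.subset_closure ⟨β, h, Or.inr rfl⟩

theorem eq_lower_mul_upper_mul_lower_mul_upper (M : SL(2, R)) {a' v w : R}
    (ha : M 0 0 * a' = 1) (hvw : v * w = M 0 0 - 1) :
    M = lowerUnitriangular ((M 1 0 - w) * a') * upperUnitriangular v * lowerUnitriangular w *
      upperUnitriangular ((M 0 1 - v) * a') := by
  have hdet : M 0 0 * M 1 1 - M 0 1 * M 1 0 = 1 := by rw [← det_fin_two]; exact M.det_coe
  ext i j
  fin_cases i <;> fin_cases j <;> simp
  · linear_combination -hvw
  · linear_combination (v - M 0 1) * ha + (v - M 0 1) * a' * hvw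
  · linear_combination (w - M 1 0) * ha + (w - M 1 0) * a' * hvw
  · linear_combination (1 - M 1 1 - a' * (M 1 0 - w) * (M 0 1 - v)) * ha
      + (a' - a' * a' * (M 1 0 - w) * (M 0 1 - v)) * hvw + a' * hdet

theorem mem_closure_elementaryOfLevel_of_isUnit (M : SL(2, R)) (ha : IsUnit (M 0 0))
    (hb : t ∣ M 0 1) (hc : t ∣ M 1 0) (ha₁ : t ^ 2 ∣ M 0 0 - 1) :
    M ∈ Subgroup.closure (elementaryOfLevel t) := by
  obtain ⟨a', ha'⟩ := isUnit_iff_exists_inv.mp ha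
  obtain ⟨s, hs⟩ := ha₁
  rw [eq_lower_mul_upper_mul_lower_mul_upper M ha' (v := t) (w := t * s) (by rw [hs]; ring)]
  have hw : t ∣ t * s := dvd_mul_right t s
  refine mul_mem (mul_mem (mul_mem ?_ ?_) ?_) ?_
  · exact lowerUnitriangular_mem_closure ((hc.sub hw).mul_right a')
  · exact upperUnitriangular_mem_closure dvd_rfl
  · exact lowerUnitriangular_mem_closure hw
  · exact upperUnitriangular_mem_closure ((hb.sub dvd_rfl).mul_right a')

variable [IsLocalRing R]

theorem isUnit_apply_zero_zero_add_apply_one_zero {M : SL(2, R)} (ha : ¬IsUnit (M 0 0)) :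
    IsUnit (M 0 0 + M 1 0) := by
  have hdet : M 0 0 * M 1 1 + -(M 0 1 * M 1 0) = 1 := by
    rw [← sub_eq_add_neg, ← det_fin_two]; exact M.det_coe
  have hc : IsUnit (M 1 0) := by
    rcases IsLocalRing.isUnit_or_isUnit_of_isUnit_add (hdet ▸ isUnit_one) with h | h
    · exact absurd (isUnit_of_mul_isUnit_left h) ha
    · exact isUnit_of_mul_isUnit_right (IsUnit.neg_iff _ |>.mp h)
  have hc' : M 1 0 = (M 0 0 + M 1 0) + -M 0 0 := by ring
  rcases IsLocalRing.isUnit_or_isUnit_of_isUnit_add (hc' ▸ hc) with h | h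
  · exact h
  · exact absurd (IsUnit.neg_iff _ |>.mp h) ha

theorem mem_closure_elementaryOfLevel_of_isUnit_level (ht : IsUnit t) (M : SL(2, R)) :
    M ∈ Subgroup.closure (elementaryOfLevel t) := by
  by_cases ha : IsUnit (M 0 0)
  · exact mem_closure_elementaryOfLevel_of_isUnit M ha ht.dvd ht.dvd (ht.pow 2).dvd
  have hM' : upperUnitriangular 1 * M ∈ Subgroup.closure (elementaryOfLevel t) := by
    refine mem_closure_elementaryOfLevel_of_isUnit _ ?_ ht.dvd ht.dvd (ht.pow 2).dvd
    simpa [coe_mul, mul_apply, Fin.sum_univ_two] using isUnit_apply_zero_zero_add_apply_one_zero ha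
  exact (Subgroup.mul_mem_cancel_left _ (upperUnitriangular_mem_closure ht.dvd)).mp hM'

theorem mem_closure_elementaryOfLevel (M : SL(2, R)) (hb : t ^ 2 ∣ M 0 1) (hc : t ^ 2 ∣ M 1 0)
    (ha : t ^ 2 ∣ M 0 0 - 1) : M ∈ Subgroup.closure (elementaryOfLevel t) := by
  by_cases ht : IsUnit t
  · exact mem_closure_elementaryOfLevel_of_isUnit_level ht M
  have ht₂ : t ∣ t ^ 2 := dvd_pow_self t two_ne_zero
  have hunit : IsUnit (M 0 0) :=
    IsLocalRing.isUnit_of_mem_nonunits_one_sub_self _ fun h ↦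
      ht (isUnit_of_dvd_unit (ht₂.trans (dvd_sub_comm.mp ha)) h)
  exact mem_closure_elementaryOfLevel_of_isUnit M hunit (ht₂.trans hb) (ht₂.trans hc) ha

end Matrix.SpecialLinearGroup

/-- The subgroup of `SL₂(ℤ_ℓ)` generated by the elementary
matrices `(1, β; 0, 1)` and `(1, 0; β, 1)` with `β ∈ ℓ^N ℤ_ℓ` contains the
principal congruence subgroup of level `ℓ^{2N}`. -/
theorem stmt_2 (ℓ : ℕ) [Fact ℓ.Prime] (N : ℕ)
    (M : Matrix.SpecialLinearGroup (Fin 2) ℤ_[ℓ])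
    (hM : ∀ i j, ((ℓ : ℤ_[ℓ]) ^ (2 * N)) ∣
      ((M : Matrix (Fin 2) (Fin 2) ℤ_[ℓ]) i j - (1 : Matrix (Fin 2) (Fin 2) ℤ_[ℓ]) i j)) :
    M ∈ Subgroup.closure
      {g : Matrix.SpecialLinearGroup (Fin 2) ℤ_[ℓ] |
        ∃ β : ℤ_[ℓ], ((ℓ : ℤ_[ℓ]) ^ N) ∣ β ∧
          ((g : Matrix (Fin 2) (Fin 2) ℤ_[ℓ]) = !![1, β; 0, 1] ∨
           (g : Matrix (Fin 2) (Fin 2) ℤ_[ℓ]) = !![1, 0; β, 1])} := by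
  have hM' : ∀ i j, ((ℓ : ℤ_[ℓ]) ^ N) ^ 2 ∣ M i j - (1 : Matrix (Fin 2) (Fin 2) ℤ_[ℓ]) i j := by
    simpa only [← pow_mul, mul_comm N 2] using hM
  exact SpecialLinearGroup.mem_closure_elementaryOfLevel M (by simpa using hM' 0 1)
    (by simpa using hM' 1 0) (by simpa using hM' 0 0)
end
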